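/- arXiv:1006.5963 — 2 statements merged into one kernel-verified Lean document; each statement's English description precedes it below -/
import Mathlib

section
/- Let V : (0,1] → ℝ be continuously differentiable satisfying V'(s) + (2/s)V(s) = −(1/2)V(s)² − h(s) for s ∈ (0,1], where h ≥ 0, ∫₀¹ h(s) ds ≤ Δ², |V| ≤ Δ on (0,1] with 0 < Δ ≤ 1/2, and s²V(s) → 0 as s → 0⁺. Then |V(s)| ≤ C·Δ² for all s ∈ (0,1], for an absolute constant C. -/
/-!
Since `(s² V)' = s² (V' + (2/s) V) = -s² (V²/2 + h) ≤ 0` and `s² V(s) → 0` as `s → 0⁺`,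
integrating from `0` gives `s² V(s) = -∫₀ˢ t² (V²/2 + h) dt`. Bounding `t² ≤ s²` in the integrand
and `∫₀¹ (V²/2 + h) ≤ Δ²/2 + Δ²` yields `0 ≤ -V(s) ≤ (3/2) Δ²`.
-/

open MeasureTheory Set Filter Topology

theorem eq_setIntegral_Ioc_of_hasDerivAt_of_tendsto_zero {f f' : ℝ → ℝ} {a b : ℝ} (hab : a < b)
    (hderiv : ∀ x ∈ Ioc a b, HasDerivAt f (f' x) x) (hint : IntegrableOn f' (Ioc a b))
    (hlim : Tendsto f (𝓝[>] a) (𝓝 0)) : f b = ∫ x in Ioc a b, f' x := by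
  classical
  -- `f` extended continuously to `a`, so that the FTC on `[a, b]` applies
  set g := Function.update f a 0
  have hcont : ContinuousOn g (Icc a b) := by
    intro x hx
    rcases eq_or_ne x a with rfl | hxa
    · rw [continuousWithinAt_update_same, Icc_sdiff_left]
      exact hlim.mono_left (nhdsWithin_mono _ Ioc_subset_Ioi_self)
    · exact ((continuousAt_update_of_ne hxa).2
        (hderiv x ⟨hx.1.lt_of_ne' hxa, hx.2⟩).continuousAt).continuousWithinAt
  have hderiv' : ∀ x ∈ Ioo a b, HasDerivAt g (f' x) x := fun x hx =>
    (hderiv x (Ioo_subset_Ioc_self hx)).congr_of_eventuallyEq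
      ((eventually_ne_nhds hx.1.ne').mono fun y hy => Function.update_of_ne hy ..)
  have hftc := intervalIntegral.integral_eq_sub_of_hasDerivAt_of_le hab.le hcont hderiv'
    ((intervalIntegrable_iff_integrableOn_Ioc_of_le hab.le).2 hint)
  rw [intervalIntegral.integral_of_le hab.le] at hftc
  simpa [g, hab.ne'] using hftc.symm

theorem hasDerivAt_sq_mul {V : ℝ → ℝ} {v t : ℝ} (hV : HasDerivAt V v t) (ht : t ≠ 0) :
    HasDerivAt (fun u => u ^ 2 * V u) (t ^ 2 * (v + 2 / t * V t)) t := by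
  refine ((hasDerivAt_pow 2 t).mul hV).congr_deriv ?_
  field_simp
  ring

theorem MeasureTheory.IntegrableOn.sq_mul_Ioc {g : ℝ → ℝ} {a b : ℝ}
    (hg : IntegrableOn g (Ioc a b)) : IntegrableOn (fun t => t ^ 2 * g t) (Ioc a b) :=
  hg.continuousOn_mul_of_subset (continuous_pow 2).continuousOn isCompact_Icc measurableSet_Ioc
    Ioc_subset_Icc_self

theorem integrableOn_Ioc_sq_of_abs_le {V : ℝ → ℝ} {a b Δ : ℝ} (hV : ContinuousOn V (Ioc a b))
    (hV_le : ∀ t ∈ Ioc a b, |V t| ≤ Δ) : IntegrableOn (fun t => V t ^ 2) (Ioc a b) := by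
  refine Integrable.of_bound ((hV.pow 2).aestronglyMeasurable measurableSet_Ioc) (Δ ^ 2)
    ((ae_restrict_iff' measurableSet_Ioc).2 (.of_forall fun t ht => ?_))
  rw [Real.norm_of_nonneg (sq_nonneg _)]
  exact sq_le_sq' (abs_le.1 (hV_le t ht)).1 (abs_le.1 (hV_le t ht)).2

theorem setIntegral_Ioc_sq_le_of_abs_le {V : ℝ → ℝ} {a b Δ : ℝ} (hab : a ≤ b)
    (hV : ContinuousOn V (Ioc a b)) (hV_le : ∀ t ∈ Ioc a b, |V t| ≤ Δ) :
    ∫ t in Ioc a b, V t ^ 2 ≤ (b - a) * Δ ^ 2 := by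
  have := setIntegral_mono_on (integrableOn_Ioc_sq_of_abs_le hV hV_le)
    (integrableOn_const measure_Ioc_lt_top.ne) measurableSet_Ioc fun t ht =>
      sq_le_sq' (abs_le.1 (hV_le t ht)).1 (abs_le.1 (hV_le t ht)).2
  simpa [Real.volume_real_Ioc_of_le hab] using this

theorem setIntegral_Ioc_sq_mul_le {g : ℝ → ℝ} {s b : ℝ} (hs : s ∈ Ioc 0 b)
    (hg : ∀ t ∈ Ioc 0 b, 0 ≤ g t) (hint : IntegrableOn g (Ioc 0 b)) :
    ∫ t in Ioc 0 s, t ^ 2 * g t ≤ s ^ 2 * ∫ t in Ioc 0 b, g t := by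
  have hsub : Ioc 0 s ⊆ Ioc 0 b := Ioc_subset_Ioc_right hs.2
  calc ∫ t in Ioc 0 s, t ^ 2 * g t
      ≤ ∫ t in Ioc 0 s, s ^ 2 * g t :=
        setIntegral_mono_on (hint.mono_set hsub).sq_mul_Ioc ((hint.mono_set hsub).const_mul _)
          measurableSet_Ioc fun t ht => by
            have := hg t (hsub ht)
            gcongr
            exacts [ht.1.le, ht.2]
    _ = s ^ 2 * ∫ t in Ioc 0 s, g t := integral_const_mul _ _
    _ ≤ s ^ 2 * ∫ t in Ioc 0 b, g t := mul_le_mul_of_nonneg_left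
        (setIntegral_mono_set hint ((ae_restrict_iff' measurableSet_Ioc).2 (.of_forall hg))
          hsub.eventuallyLE) (sq_nonneg s)

theorem sq_mul_eq_neg_setIntegral_of_raychaudhuri {V V' h : ℝ → ℝ} {s : ℝ} (hs : 0 < s)
    (hV : ∀ t ∈ Ioc 0 s, HasDerivAt V (V' t) t)
    (hode : ∀ t ∈ Ioc 0 s, V' t + (2 / t) * V t = -(1 / 2) * V t ^ 2 - h t)
    (hint : IntegrableOn (fun t => V t ^ 2 / 2 + h t) (Ioc 0 s))
    (hlim : Tendsto (fun t => t ^ 2 * V t) (𝓝[>] 0) (𝓝 0)) :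
    s ^ 2 * V s = -∫ t in Ioc 0 s, t ^ 2 * (V t ^ 2 / 2 + h t) := by
  rw [← integral_neg]
  refine eq_setIntegral_Ioc_of_hasDerivAt_of_tendsto_zero (f := fun t => t ^ 2 * V t) hs
    (fun t ht => (hasDerivAt_sq_mul (hV t ht) ht.1.ne').congr_deriv ?_) hint.sq_mul_Ioc.neg hlim
  rw [hode t ht]
  ring

/-- Raychaudhuri-type estimate: if `V' + (2/s)V = -(1/2)V² - h` on `(0,1]` with `h ≥ 0`,
`∫₀¹ h ≤ Δ²`, `|V| ≤ Δ ≤ 1/2` and `s²V(s) → 0` as `s → 0⁺`, then `|V| ≤ C Δ²` for an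
absolute constant `C`. -/
theorem stmt_2 :
    ∃ C : ℝ, 0 < C ∧
      ∀ (V V' h : ℝ → ℝ) (Δ : ℝ), 0 < Δ → Δ ≤ 1 / 2 →
        (∀ s ∈ Ioc (0:ℝ) 1, HasDerivAt V (V' s) s) →
        ContinuousOn V' (Ioc (0:ℝ) 1) →
        (∀ s ∈ Ioc (0:ℝ) 1, V' s + (2 / s) * V s = -(1 / 2) * (V s) ^ 2 - h s) →
        (∀ s ∈ Ioc (0:ℝ) 1, 0 ≤ h s) →
        IntegrableOn h (Ioc (0:ℝ) 1) →
        (∫ s in Ioc (0:ℝ) 1, h s) ≤ Δ ^ 2 →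
        (∀ s ∈ Ioc (0:ℝ) 1, |V s| ≤ Δ) →
        Tendsto (fun s => s ^ 2 * V s) (nhdsWithin 0 (Ioi 0)) (nhds 0) →
        ∀ s ∈ Ioc (0:ℝ) 1, |V s| ≤ C * Δ ^ 2 := by
  refine ⟨3 / 2, by norm_num, ?_⟩
  intro V V' h Δ _ _ hV _ hode hh hh_int hh_le hV_le hlim s hs
  have hsub : Ioc 0 s ⊆ Ioc 0 1 := Ioc_subset_Ioc_right hs.2
  have hV_cont : ContinuousOn V (Ioc 0 1) := fun t ht => (hV t ht).continuousAt.continuousWithinAt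
  have hV_sq_int := integrableOn_Ioc_sq_of_abs_le hV_cont hV_le
  have hg_int : IntegrableOn (fun t => V t ^ 2 / 2 + h t) (Ioc 0 1) :=
    (hV_sq_int.div_const 2).add hh_int
  have hg_nonneg : ∀ t ∈ Ioc (0:ℝ) 1, 0 ≤ V t ^ 2 / 2 + h t := fun t ht => by
    have := hh t ht
    positivity
  have hg_le : ∫ t in Ioc (0:ℝ) 1, (V t ^ 2 / 2 + h t) ≤ 3 / 2 * Δ ^ 2 := by
    rw [integral_add (hV_sq_int.div_const 2) hh_int, integral_div]
    have := setIntegral_Ioc_sq_le_of_abs_le zero_le_one hV_cont hV_le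
    linarith
  have hW := sq_mul_eq_neg_setIntegral_of_raychaudhuri hs.1 (fun t ht => hV t (hsub ht))
    (fun t ht => hode t (hsub ht)) (hg_int.mono_set hsub) hlim
  have hI_nonneg : 0 ≤ ∫ t in Ioc 0 s, t ^ 2 * (V t ^ 2 / 2 + h t) :=
    setIntegral_nonneg measurableSet_Ioc fun t ht => mul_nonneg (sq_nonneg t) (hg_nonneg t (hsub ht))
  have hI_le := setIntegral_Ioc_sq_mul_le hs hg_nonneg hg_int
  have hs2 : 0 < s ^ 2 := pow_pos hs.1 2
  rw [abs_of_nonpos (by nlinarith)]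
  nlinarith
end

section
/- Let F : (0,1] → ℝ≥0 be absolutely continuous satisfying F'(t) + (p/2)·(v'(t)/v(t))·F(t) ≤ G(t)F(t) + H(t), where v : (0,1] → (0,∞) is C¹ and increasing, p ≥ 1 is an integer, G, H ≥ 0 are integrable, and v(t)^{p/2}F(t) → 0 as t → 0⁺. Then F(t) ≤ exp(∫₀¹ G)·v(t)^{−p/2}·∫₀ᵗ v(t')^{p/2} H(t') dt' for all t ∈ (0,1]. -/
/-!
With `φ = v^{p/2} F` the transport inequality becomes the linear differential inequality
`φ' ≤ G φ + v^{p/2} H`, to which Gronwall's lemma applies on every `[a, t] ⊂ (0, 1]`; letting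
`a → 0` kills the boundary term `φ a`. Since `G` is merely integrable, `∫ G` cannot serve as an
integrating factor directly: `G` is replaced by a nonnegative continuous `g` close to it in `L¹`,
and the error `(G - g) φ` is absorbed into the forcing term using the boundedness of `φ` on
`[a, t]`. No integrability of `φ'` is needed: integrating the inequality only uses an
integrable upper bound for it.
-/

open MeasureTheory Set Filter Topology Real

theorem le_exp_integral_mul_of_hasDerivWithinAt_le_of_continuous
    {φ φ' g k : ℝ → ℝ} {a b : ℝ} (hab : a ≤ b) (hφ : ContinuousOn φ (Icc a b))
    (hφ' : ∀ x ∈ Ioo a b, HasDerivWithinAt φ (φ' x) (Ioi x) x)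
    (hg : Continuous g) (hg0 : ∀ x ∈ Icc a b, 0 ≤ g x)
    (hk : IntegrableOn k (Icc a b)) (hk0 : ∀ x ∈ Ioo a b, 0 ≤ k x)
    (hle : ∀ x ∈ Ioo a b, φ' x ≤ g x * φ x + k x) :
    φ b ≤ exp (∫ x in a..b, g x) * (φ a + ∫ x in a..b, k x) := by
  set Γ : ℝ → ℝ := fun x => ∫ s in a..x, g s
  have hΓ0 : ∀ x ∈ Icc a b, 0 ≤ Γ x := fun x hx =>
    intervalIntegral.integral_nonneg hx.1 fun s hs => hg0 s ⟨hs.1, hs.2.trans hx.2⟩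
  -- `exp (-Γ)` is an integrating factor: `(exp (-Γ) φ)' = exp (-Γ) (φ' - g φ) ≤ k`.
  have hψ : exp (-Γ b) * φ b - exp (-Γ a) * φ a ≤ ∫ x in a..b, k x := by
    refine intervalIntegral.sub_le_integral_of_hasDeriv_right_of_le hab
      (((continuous_exp.comp (intervalIntegral.continuous_primitive
        (fun _ _ => hg.intervalIntegrable _ _) a).neg).continuousOn).mul hφ)
      (fun x hx => (((hg.integral_hasStrictDerivAt a x).hasDerivAt.neg.exp).hasDerivWithinAt.mul
        (hφ' x hx))) hk fun x hx => ?_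
    have hexp : exp (-Γ x) ≤ 1 :=
      exp_le_one_iff.2 (neg_nonpos.2 (hΓ0 x (Ioo_subset_Icc_self hx)))
    calc exp (-Γ x) * -g x * φ x + exp (-Γ x) * φ' x
        = exp (-Γ x) * (φ' x - g x * φ x) := by ring
      _ ≤ exp (-Γ x) * k x := by gcongr; linarith [hle x hx]
      _ ≤ k x := mul_le_of_le_one_left (hk0 x hx) hexp
  have hΓa : Γ a = 0 := intervalIntegral.integral_same
  rw [hΓa, neg_zero, exp_zero, one_mul] at hψ
  calc φ b = exp (Γ b) * (exp (-Γ b) * φ b) := by rw [← mul_assoc, ← exp_add]; simp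
    _ ≤ exp (Γ b) * (φ a + ∫ x in a..b, k x) := by gcongr; linarith

theorem le_exp_integral_mul_of_hasDerivWithinAt_le
    {φ φ' G h : ℝ → ℝ} {a b : ℝ} (hab : a ≤ b) (hφ : ContinuousOn φ (Icc a b))
    (hφ' : ∀ x ∈ Ioo a b, HasDerivWithinAt φ (φ' x) (Ioi x) x) (hφa : 0 ≤ φ a)
    (hG : IntegrableOn G (Icc a b)) (hG0 : ∀ x ∈ Icc a b, 0 ≤ G x)
    (hh : IntegrableOn h (Icc a b)) (hh0 : ∀ x ∈ Icc a b, 0 ≤ h x)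
    (hle : ∀ x ∈ Ioo a b, φ' x ≤ G x * φ x + h x) :
    φ b ≤ exp (∫ x in a..b, G x) * (φ a + ∫ x in a..b, h x) := by
  have hint : ∀ {f : ℝ → ℝ}, IntegrableOn f (Icc a b) → IntervalIntegrable f volume a b :=
    fun hf => (uIcc_of_le hab ▸ hf).intervalIntegrable
  obtain ⟨M, hM⟩ := isCompact_Icc.exists_bound_of_continuousOn hφ
  have hM0 : 0 ≤ M := (norm_nonneg _).trans (hM a (left_mem_Icc.2 hab))
  have approx : ∀ ε > 0,
      φ b ≤ exp ((∫ x in a..b, G x) + ε) * (φ a + (M * ε + ∫ x in a..b, h x)) := by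
    intro ε hε
    obtain ⟨g₀, hg₀G, -⟩ := hG.exists_boundedContinuous_integral_sub_le hε
    set g : ℝ → ℝ := fun x => max (g₀ x) 0
    have hg : Continuous g := g₀.continuous.max continuous_const
    have hGg : ∀ x ∈ Icc a b, |G x - g x| ≤ ‖G x - g₀ x‖ := fun x hx => by
      simpa [g, max_eq_left (hG0 x hx)] using abs_max_sub_max_le_abs (G x) (g₀ x) 0
    have hdiff : IntegrableOn (fun x => |G x - g x|) (Icc a b) :=
      (hG.sub hg.integrableOn_Icc).abs
    have hdiffε : ∫ x in a..b, |G x - g x| ≤ ε := by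
      rw [intervalIntegral.integral_of_le hab, ← integral_Icc_eq_integral_Ioc]
      exact (setIntegral_mono_on hdiff (hG.sub g₀.continuous.integrableOn_Icc).norm
        measurableSet_Icc hGg).trans hg₀G
    have hgG : ∫ x in a..b, g x ≤ (∫ x in a..b, G x) + ε := by
      calc ∫ x in a..b, g x ≤ ∫ x in a..b, (G x + |G x - g x|) :=
            intervalIntegral.integral_mono_on hab (hint hg.integrableOn_Icc) (hint (hG.add hdiff))
              fun x _ => by linarith [neg_abs_le (G x - g x)]
        _ ≤ (∫ x in a..b, G x) + ε := by
            rw [intervalIntegral.integral_add (hint hG) (hint hdiff)]; linarith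
    have hk : ∫ x in a..b, (M * |G x - g x| + h x) ≤ M * ε + ∫ x in a..b, h x := by
      rw [intervalIntegral.integral_add (hint (hdiff.const_mul M)) (hint hh),
        intervalIntegral.integral_const_mul]
      gcongr
    have hk0 : 0 ≤ ∫ x in a..b, (M * |G x - g x| + h x) :=
      intervalIntegral.integral_nonneg hab fun x hx => by have := hh0 x hx; positivity
    calc φ b ≤ exp (∫ x in a..b, g x) * (φ a + ∫ x in a..b, (M * |G x - g x| + h x)) := by
          refine le_exp_integral_mul_of_hasDerivWithinAt_le_of_continuous hab hφ hφ' hg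
            (fun x _ => le_max_right _ _) ((hdiff.const_mul M).add hh)
            (fun x hx => by have := hh0 x (Ioo_subset_Icc_self hx); positivity) fun x hx => ?_
          have : (G x - g x) * φ x ≤ M * |G x - g x| :=
            calc (G x - g x) * φ x ≤ |G x - g x| * |φ x| := by
                  rw [← abs_mul]; exact le_abs_self _
              _ ≤ M * |G x - g x| := by
                rw [mul_comm]; gcongr; exact hM x (Ioo_subset_Icc_self hx)
          linarith [hle x hx]
      _ ≤ exp ((∫ x in a..b, G x) + ε) * (φ a + (M * ε + ∫ x in a..b, h x)) := by
          gcongr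
  have hcont : ContinuousWithinAt
      (fun ε => exp ((∫ x in a..b, G x) + ε) * (φ a + (M * ε + ∫ x in a..b, h x)))
      (Ioi 0) 0 := by
    fun_prop
  simpa using ge_of_tendsto hcont (eventually_nhdsWithin_of_forall approx)

theorem le_exp_integral_mul_integral_of_tendsto_nhdsGT
    {φ φ' G h : ℝ → ℝ} {c d : ℝ}
    (hφ' : ∀ x ∈ Ioc c d, HasDerivAt φ (φ' x) x) (hφ0 : ∀ x ∈ Ioc c d, 0 ≤ φ x)
    (hG : IntegrableOn G (Ioc c d)) (hG0 : ∀ x ∈ Ioc c d, 0 ≤ G x)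
    (hh : IntegrableOn h (Ioc c d)) (hh0 : ∀ x ∈ Ioc c d, 0 ≤ h x)
    (hle : ∀ x ∈ Ioc c d, φ' x ≤ G x * φ x + h x) (hlim : Tendsto φ (𝓝[>] c) (𝓝 0))
    {t : ℝ} (ht : t ∈ Ioc c d) :
    φ t ≤ exp (∫ x in Ioc c d, G x) * ∫ x in Ioc c t, h x := by
  have hsub_t : Ioc c t ⊆ Ioc c d := Ioc_subset_Ioc_right ht.2
  have hinterior : ∀ a ∈ Ioo c t,
      φ t ≤ exp (∫ x in Ioc c d, G x) * (φ a + ∫ x in Ioc c t, h x) := by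
    intro a ha
    have hsub : Icc a t ⊆ Ioc c d := Icc_subset_Ioc_iff ha.2.le |>.2 ⟨ha.1, ht.2⟩
    have hφa := hφ0 a (hsub (left_mem_Icc.2 ha.2.le))
    have hGat : ∫ x in a..t, G x ≤ ∫ x in Ioc c d, G x := by
      rw [intervalIntegral.integral_of_le ha.2.le]
      exact setIntegral_mono_set hG ((ae_restrict_iff' measurableSet_Ioc).2 (ae_of_all _ hG0))
        (Ioc_subset_Ioc ha.1.le ht.2).eventuallyLE
    have hhat : ∫ x in a..t, h x ≤ ∫ x in Ioc c t, h x := by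
      rw [intervalIntegral.integral_of_le ha.2.le]
      exact setIntegral_mono_set (hh.mono_set hsub_t)
        ((ae_restrict_iff' measurableSet_Ioc).2 (ae_of_all _ fun x hx => hh0 x (hsub_t hx)))
        (Ioc_subset_Ioc_left ha.1.le).eventuallyLE
    have hhat0 : 0 ≤ ∫ x in a..t, h x :=
      intervalIntegral.integral_nonneg ha.2.le fun x hx => hh0 x (hsub hx)
    calc φ t ≤ exp (∫ x in a..t, G x) * (φ a + ∫ x in a..t, h x) :=
          le_exp_integral_mul_of_hasDerivWithinAt_le ha.2.le
            (fun x hx => (hφ' x (hsub hx)).continuousAt.continuousWithinAt)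
            (fun x hx => (hφ' x (hsub (Ioo_subset_Icc_self hx))).hasDerivWithinAt) hφa
            (hG.mono_set hsub) (fun x hx => hG0 x (hsub hx))
            (hh.mono_set hsub) (fun x hx => hh0 x (hsub hx))
            (fun x hx => hle x (hsub (Ioo_subset_Icc_self hx)))
      _ ≤ exp (∫ x in Ioc c d, G x) * (φ a + ∫ x in Ioc c t, h x) := by gcongr
  have hlim' : Tendsto (fun a => exp (∫ x in Ioc c d, G x) * (φ a + ∫ x in Ioc c t, h x))
      (𝓝[>] c) (𝓝 (exp (∫ x in Ioc c d, G x) * (0 + ∫ x in Ioc c t, h x))) :=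
    (hlim.add_const _).const_mul _
  simpa using ge_of_tendsto hlim' (mem_of_superset (Ioo_mem_nhdsGT ht.1) hinterior)

theorem HasDerivAt.rpow_const_mul_of_pos {v F : ℝ → ℝ} {v' F' x : ℝ}
    (hv : HasDerivAt v v' x) (hF : HasDerivAt F F' x) (hvx : 0 < v x) (q : ℝ) :
    HasDerivAt (fun s => v s ^ q * F s) (v x ^ q * (F' + q * (v' / v x) * F x)) x := by
  refine ((hv.rpow_const (p := q) (Or.inl hvx.ne')).mul hF).congr_deriv ?_
  rw [rpow_sub_one hvx.ne']
  field_simp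
  ring

theorem MonotoneOn.integrableOn_rpow_mul {v H : ℝ → ℝ} {c d q : ℝ}
    (hvmono : MonotoneOn v (Ioc c d)) (hv : ContinuousOn v (Ioc c d))
    (hv0 : ∀ x ∈ Ioc c d, 0 ≤ v x) (hq : 0 ≤ q) (hH : IntegrableOn H (Ioc c d)) :
    IntegrableOn (fun s => v s ^ q * H s) (Ioc c d) := by
  rcases le_or_gt d c with hdc | hcd
  · simp [Ioc_eq_empty_of_le hdc]
  refine hH.bdd_mul ((hv.rpow_const fun _ _ => Or.inr hq).aestronglyMeasurable measurableSet_Ioc)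
    ((ae_restrict_iff' measurableSet_Ioc).2 (ae_of_all _ fun x hx => ?_)) (c := v d ^ q)
  rw [norm_of_nonneg (rpow_nonneg (hv0 x hx) q)]
  exact rpow_le_rpow (hv0 x hx) (hvmono hx (right_mem_Ioc.2 hcd) hx.2) hq

theorem stmt_3_general (p : ℕ)
    (F F' G H v v' : ℝ → ℝ)
    (hF : ∀ t ∈ Ioc (0:ℝ) 1, HasDerivAt F (F' t) t)
    (hFpos : ∀ t ∈ Ioc (0:ℝ) 1, 0 ≤ F t)
    (hv : ∀ t ∈ Ioc (0:ℝ) 1, HasDerivAt v (v' t) t)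
    (hvpos : ∀ t ∈ Ioc (0:ℝ) 1, 0 < v t)
    (hvmono : MonotoneOn v (Ioc (0:ℝ) 1))
    (hG : ∀ t ∈ Ioc (0:ℝ) 1, 0 ≤ G t)
    (hH : ∀ t ∈ Ioc (0:ℝ) 1, 0 ≤ H t)
    (hGint : IntegrableOn G (Ioc (0:ℝ) 1))
    (hHint : IntegrableOn H (Ioc (0:ℝ) 1))
    (hineq : ∀ t ∈ Ioc (0:ℝ) 1,
      F' t + ((p : ℝ) / 2) * (v' t / v t) * F t ≤ G t * F t + H t)
    (hlim : Tendsto (fun t => v t ^ ((p : ℝ) / 2) * F t)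
      (nhdsWithin 0 (Ioi 0)) (nhds 0)) :
    ∀ t ∈ Ioc (0:ℝ) 1,
      F t ≤ Real.exp (∫ s in Ioc (0:ℝ) 1, G s) * v t ^ (-(p : ℝ) / 2) *
        ∫ s in Ioc (0:ℝ) t, v s ^ ((p : ℝ) / 2) * H s := by
  intro t ht
  set q : ℝ := (p : ℝ) / 2
  have hweight : ∀ x ∈ Ioc (0:ℝ) 1, 0 ≤ v x ^ q := fun x hx => rpow_nonneg (hvpos x hx).le q
  have hφ := le_exp_integral_mul_integral_of_tendsto_nhdsGT
    (fun x hx => (hv x hx).rpow_const_mul_of_pos (hF x hx) (hvpos x hx) q)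
    (fun x hx => mul_nonneg (hweight x hx) (hFpos x hx)) hGint hG
    (hvmono.integrableOn_rpow_mul (fun x hx => (hv x hx).continuousAt.continuousWithinAt)
      (fun x hx => (hvpos x hx).le) (by positivity) hHint)
    (fun x hx => mul_nonneg (hweight x hx) (hH x hx))
    (fun x hx => by
      linear_combination mul_le_mul_of_nonneg_left (hineq x hx) (hweight x hx)) hlim ht
  have hvt : 0 < v t ^ q := rpow_pos_of_pos (hvpos t ht) q
  rw [neg_div, rpow_neg (hvpos t ht).le, mul_right_comm, ← div_eq_mul_inv, le_div_iff₀ hvt]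
  linarith

/-- Scalar transport estimate: if `F' + (p/2)(v'/v)F ≤ G F + H` with `v` increasing and
positive, `G, H ≥ 0`, and `v^{p/2} F → 0` at `0⁺`, then
`F t ≤ exp(∫₀¹ G) v(t)^{-p/2} ∫₀ᵗ v^{p/2} H`. -/
theorem stmt_3 (p : ℕ) (hp : 1 ≤ p)
    (F F' G H v v' : ℝ → ℝ)
    (hF : ∀ t ∈ Ioc (0:ℝ) 1, HasDerivAt F (F' t) t)
    (hFpos : ∀ t ∈ Ioc (0:ℝ) 1, 0 ≤ F t)
    (hv : ∀ t ∈ Ioc (0:ℝ) 1, HasDerivAt v (v' t) t)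
    (hvpos : ∀ t ∈ Ioc (0:ℝ) 1, 0 < v t)
    (hvmono : MonotoneOn v (Ioc (0:ℝ) 1))
    (hG : ∀ t ∈ Ioc (0:ℝ) 1, 0 ≤ G t)
    (hH : ∀ t ∈ Ioc (0:ℝ) 1, 0 ≤ H t)
    (hGint : IntegrableOn G (Ioc (0:ℝ) 1))
    (hHint : IntegrableOn H (Ioc (0:ℝ) 1))
    (hineq : ∀ t ∈ Ioc (0:ℝ) 1,
      F' t + ((p : ℝ) / 2) * (v' t / v t) * F t ≤ G t * F t + H t)
    (hlim : Tendsto (fun t => v t ^ ((p : ℝ) / 2) * F t)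
      (nhdsWithin 0 (Ioi 0)) (nhds 0)) :
    ∀ t ∈ Ioc (0:ℝ) 1,
      F t ≤ Real.exp (∫ s in Ioc (0:ℝ) 1, G s) * v t ^ (-(p : ℝ) / 2) *
        ∫ s in Ioc (0:ℝ) t, v s ^ ((p : ℝ) / 2) * H s :=
  stmt_3_general p F F' G H v v' hF hFpos hv hvpos hvmono hG hH hGint hHint hineq hlim
end
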